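/- arXiv:2109.14841 — 3 statements merged into one kernel-verified Lean document; each statement's English description precedes it below -/
import Mathlib

section
/- Let U be an open subset of a smooth manifold N, let Z_1,...,Z_m be smooth vector fields on U, and suppose there is a smooth function F: U → GL(m,ℝ) such that [Ẑ_1,...,Ẑ_m] = [Z_1,...,Z_m]·F pointwise on U (i.e. Ẑ_j = Σ_i F_{ij} Z_i). Then for every x ∈ U and every k ≥ 1, the subspace of T_xN spanned by iterated Lie brackets of the Z_i of depth at most k equals the corresponding subspace for the Ẑ_i: Lie^{(k)}(Z_1,...,Z_m)(x) = Lie^{(k)}(Ẑ_1,...,Ẑ_m)(x). In particular the full generated Lie algebra evaluations agree: Lie(Z_1,...,Z_m)(x) = Lie(Ẑ_1,...,Ẑ_m)(x). -/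
/- STATEMENT 0: Invariance of the iterated Lie-bracket spans
`Lie^{(k)}(Z_1,...,Z_m)(x)` under a smooth `GL(m,ℝ)`-valued change of frame,
formalized in a local chart (an open subset `U` of a Euclidean space, modelling
a chart of the manifold `N`). -/

noncomputable section
open Set

/-- Euclidean model space. -/
abbrev EucSp (N : ℕ) : Type := EuclideanSpace ℝ (Fin N)

/-- Lie bracket of two vector fields on a normed space. -/
def lieBkt {F : Type*} [NormedAddCommGroup F] [NormedSpace ℝ F] (X Y : F → F) : F → F :=
  fun x => fderiv ℝ Y x (X x) - fderiv ℝ X x (Y x)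

/-- `sigmaSet Z k` is the set `Σ^{k+1}` of iterated brackets
`[Z_{i_1}, [Z_{i_2}, [..., Z_{i_k}]]]` of depth `k+1`. -/
def sigmaSet {F : Type*} [NormedAddCommGroup F] [NormedSpace ℝ F] {m : ℕ}
    (Z : Fin m → F → F) : ℕ → Set (F → F)
  | 0 => Set.range Z
  | k + 1 => {W | ∃ i, ∃ Y ∈ sigmaSet Z k, W = lieBkt (Z i) Y}

/-- `lieEval Z k x` is `Lie^{(k+1)}(Z_1,...,Z_m)(x)`: the span of the values at `x`
of all iterated brackets of depth at most `k+1`. -/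
def lieEval {F : Type*} [NormedAddCommGroup F] [NormedSpace ℝ F] {m : ℕ}
    (Z : Fin m → F → F) (k : ℕ) (x : F) : Submodule ℝ F :=
  Submodule.span ℝ {v | ∃ j ≤ k, ∃ Y ∈ sigmaSet Z j, v = Y x}

/-- `fullLieEval Z x` is `Lie(Z_1,...,Z_m)(x)`. -/
def fullLieEval {F : Type*} [NormedAddCommGroup F] [NormedSpace ℝ F] {m : ℕ}
    (Z : Fin m → F → F) (x : F) : Submodule ℝ F :=
  ⨆ k, lieEval Z k x

variable {E : Type*} [NormedAddCommGroup E] [NormedSpace ℝ E] {U : Set E} {m : ℕ}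

lemma lieBkt_contDiffOn (hU : IsOpen U) {X Y : E → E}
    (hX : ContDiffOn ℝ (⊤ : ℕ∞) X U) (hY : ContDiffOn ℝ (⊤ : ℕ∞) Y U) :
    ContDiffOn ℝ (⊤ : ℕ∞) (lieBkt X Y) U := by
  unfold lieBkt
  exact ((hY.fderiv_of_isOpen hU (by simp)).clm_apply hX).sub
    ((hX.fderiv_of_isOpen hU (by simp)).clm_apply hY)

lemma sigma_smooth (hU : IsOpen U) {Z : Fin m → E → E}
    (hZ : ∀ i, ContDiffOn ℝ (⊤ : ℕ∞) (Z i) U) :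
    ∀ j, ∀ Y ∈ sigmaSet Z j, ContDiffOn ℝ (⊤ : ℕ∞) Y U := by
  intro j
  induction j with
  | zero => rintro Y ⟨i, rfl⟩; exact hZ i
  | succ k ih =>
    rintro W ⟨i, Y, hY, rfl⟩
    exact lieBkt_contDiffOn hU (hZ i) (ih Y hY)

/-- A representation of `W` on `U` as a smooth combination of brackets of `Z`
of depth at most `k+1`. -/
def LieRep (Z : Fin m → E → E) (U : Set E) (k : ℕ) (W : E → E) : Prop :=
  ∃ (ι : Type) (_ : Fintype ι) (c : ι → E → ℝ) (Y : ι → E → E),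
    (∀ a, ContDiffOn ℝ (⊤ : ℕ∞) (c a) U) ∧ (∀ a, ∃ j ≤ k, Y a ∈ sigmaSet Z j) ∧
    ∀ y ∈ U, W y = ∑ a, c a y • Y a y

lemma rep_bracket (hU : IsOpen U) {Z : Fin m → E → E}
    (hZ : ∀ i, ContDiffOn ℝ (⊤ : ℕ∞) (Z i) U)
    (a : Fin m → E → ℝ) (ha : ∀ i, ContDiffOn ℝ (⊤ : ℕ∞) (a i) U) (X : E → E)
    (hXrep : ∀ y ∈ U, X y = ∑ i, a i y • Z i y)
    {k : ℕ} {W : E → E} (hW : LieRep Z U k W) : LieRep Z U (k + 1) (lieBkt X W) := by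
  classical
  obtain ⟨ι, _, c, Y, hc, hYdep, hrep⟩ := hW
  have hYs : ∀ b, ContDiffOn ℝ (⊤ : ℕ∞) (Y b) U := by
    intro b; obtain ⟨j, _, hj⟩ := hYdep b; exact sigma_smooth hU hZ j _ hj
  set f : E → E := fun y => ∑ i, a i y • Z i y with hf
  set g : E → E := fun y => ∑ b, c b y • Y b y with hg
  have hfs : ContDiffOn ℝ (⊤ : ℕ∞) f U :=
    ContDiffOn.sum fun i _ => (ha i).smul (hZ i)
  have hgs : ContDiffOn ℝ (⊤ : ℕ∞) g U :=
    ContDiffOn.sum fun b _ => (hc b).smul (hYs b)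
  refine ⟨(Fin m × ι) ⊕ ι ⊕ Fin m, inferInstance,
    Sum.elim (fun p y => a p.1 y * c p.2 y)
      (Sum.elim (fun b y => fderiv ℝ (c b) y (f y))
        (fun i y => -(fderiv ℝ (a i) y (g y)))),
    Sum.elim (fun p => lieBkt (Z p.1) (Y p.2)) (Sum.elim Y Z), ?_, ?_, ?_⟩
  · rintro (⟨i, b⟩ | b | i)
    · exact (ha i).mul (hc b)
    · exact ((hc b).fderiv_of_isOpen hU (by simp)).clm_apply hfs
    · exact (((ha i).fderiv_of_isOpen hU (by simp)).clm_apply hgs).neg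
  · rintro (⟨i, b⟩ | b | i)
    · obtain ⟨j, hjk, hj⟩ := hYdep b
      exact ⟨j + 1, by omega, ⟨i, Y b, hj, rfl⟩⟩
    · obtain ⟨j, hjk, hj⟩ := hYdep b
      exact ⟨j, by omega, hj⟩
    · exact ⟨0, by omega, ⟨i, rfl⟩⟩
  · intro y hy
    have hyU : U ∈ nhds y := hU.mem_nhds hy
    -- differentiability facts at y
    have hda : ∀ i, DifferentiableAt ℝ (a i) y := fun i =>
      (((ha i).contDiffAt hyU).differentiableAt (by simp))
    have hdc : ∀ b, DifferentiableAt ℝ (c b) y := fun b =>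
      (((hc b).contDiffAt hyU).differentiableAt (by simp))
    have hdZ : ∀ i, DifferentiableAt ℝ (Z i) y := fun i =>
      (((hZ i).contDiffAt hyU).differentiableAt (by simp))
    have hdY : ∀ b, DifferentiableAt ℝ (Y b) y := fun b =>
      (((hYs b).contDiffAt hyU).differentiableAt (by simp))
    have hXf : fderiv ℝ X y = fderiv ℝ f y := by
      apply Filter.EventuallyEq.fderiv_eq
      exact Filter.eventuallyEq_of_mem hyU hXrep
    have hWg : fderiv ℝ W y = fderiv ℝ g y := by
      apply Filter.EventuallyEq.fderiv_eq
      exact Filter.eventuallyEq_of_mem hyU hrep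
    have hXy : X y = f y := hXrep y hy
    have hWy : W y = g y := hrep y hy
    have hfd : fderiv ℝ f y = ∑ i, (a i y • fderiv ℝ (Z i) y
        + (fderiv ℝ (a i) y).smulRight (Z i y)) := by
      rw [hf, fderiv_fun_sum (A := fun i y => a i y • Z i y) fun i _ => ((hda i).smul (hdZ i))]
      exact Finset.sum_congr rfl fun i _ => fderiv_smul (hda i) (hdZ i)
    have hgd : fderiv ℝ g y = ∑ b, (c b y • fderiv ℝ (Y b) y
        + (fderiv ℝ (c b) y).smulRight (Y b y)) := by
      rw [hg, fderiv_fun_sum (A := fun b y => c b y • Y b y) fun b _ => ((hdc b).smul (hdY b))]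
      exact Finset.sum_congr rfl fun b _ => fderiv_smul (hdc b) (hdY b)
    show lieBkt X W y = _
    rw [lieBkt, hXf, hWg, hXy, hWy, hfd, hgd]
    simp only [Fintype.sum_sum_type, Fintype.sum_prod_type, Sum.elim_inl, Sum.elim_inr,
      ContinuousLinearMap.sum_apply, ContinuousLinearMap.add_apply,
      ContinuousLinearMap.smul_apply, ContinuousLinearMap.smulRight_apply, lieBkt]
    -- expand f y and g y inside linear maps
    have expand1 : ∀ b, fderiv ℝ (Y b) y (f y) = ∑ i, a i y • fderiv ℝ (Y b) y (Z i y) := by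
      intro b; rw [hf]; simp [map_sum, map_smul]
    have expand2 : ∀ i, fderiv ℝ (Z i) y (g y) = ∑ b, c b y • fderiv ℝ (Z i) y (Y b y) := by
      intro i; rw [hg]; simp [map_sum, map_smul]
    simp only [expand1, expand2]
    simp only [hf, hg]
    have h13 : ((∑ b, c b y • ∑ i, a i y • fderiv ℝ (Y b) y (Z i y))
        - ∑ i, a i y • ∑ b, c b y • fderiv ℝ (Z i) y (Y b y))
        = ∑ i, ∑ b, (a i y * c b y) •
            (fderiv ℝ (Y b) y (Z i y) - fderiv ℝ (Z i) y (Y b y)) := by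
      simp only [Finset.smul_sum, smul_smul, smul_sub, Finset.sum_sub_distrib]
      congr 1
      rw [Finset.sum_comm]
      simp [mul_comm]
    simp only [Finset.sum_add_distrib, neg_smul, Finset.sum_neg_distrib]
    rw [← h13]
    abel

lemma rep_of_sigma (hU : IsOpen U) {Z Zhat : Fin m → E → E}
    (hZ : ∀ i, ContDiffOn ℝ (⊤ : ℕ∞) (Z i) U)
    (G : Fin m → Fin m → E → ℝ) (hG : ∀ i j, ContDiffOn ℝ (⊤ : ℕ∞) (G i j) U)
    (hrel : ∀ y ∈ U, ∀ j, Zhat j y = ∑ i, G i j y • Z i y) :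
    ∀ k, ∀ W ∈ sigmaSet Zhat k, LieRep Z U k W := by
  intro k
  induction k with
  | zero =>
    rintro W ⟨j, rfl⟩
    exact ⟨Fin m, inferInstance, fun i => G i j, Z, fun i => hG i j,
      fun i => ⟨0, le_refl _, ⟨i, rfl⟩⟩, fun y hy => hrel y hy j⟩
  | succ k ih =>
    rintro W ⟨i, Y, hY, rfl⟩
    exact rep_bracket hU hZ (fun l => G l i) (fun l => hG l i) (Zhat i)
      (fun y hy => hrel y hy i) (ih Y hY)

lemma lieEval_le_of_rep {Z Zhat : Fin m → E → E} {k : ℕ} {x : E} (hx : x ∈ U)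
    (hrep : ∀ j, ∀ W ∈ sigmaSet Zhat j, LieRep Z U j W) :
    lieEval Zhat k x ≤ lieEval Z k x := by
  rw [lieEval, Submodule.span_le]
  rintro v ⟨j, hjk, W, hW, rfl⟩
  obtain ⟨ι, _, c, Y, hc, hYdep, hr⟩ := hrep j W hW
  rw [hr x hx]
  apply Submodule.sum_mem
  intro a _
  apply Submodule.smul_mem
  apply Submodule.subset_span
  obtain ⟨j', hj', hmem⟩ := hYdep a
  exact ⟨j', le_trans hj' hjk, Y a, hmem, rfl⟩

lemma contDiffOn_finset_prod {ι : Type*} (s : Finset ι) (f : ι → E → ℝ)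
    (h : ∀ i ∈ s, ContDiffOn ℝ (⊤ : ℕ∞) (f i) U) :
    ContDiffOn ℝ (⊤ : ℕ∞) (fun x => ∏ i ∈ s, f i x) U := by
  classical
  induction s using Finset.induction with
  | empty => simpa using contDiffOn_const
  | insert _ _ hi ih =>
    simp only [Finset.prod_insert hi]
    exact (h _ (Finset.mem_insert_self _ _)).mul
      (ih fun i hi' => h _ (Finset.mem_insert_of_mem hi'))

lemma contDiffOn_det {M : E → Matrix (Fin m) (Fin m) ℝ}
    (h : ∀ i j, ContDiffOn ℝ (⊤ : ℕ∞) (fun x => M x i j) U) :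
    ContDiffOn ℝ (⊤ : ℕ∞) (fun x => (M x).det) U := by
  simp only [Matrix.det_apply']
  apply ContDiffOn.sum
  intro σ _
  exact contDiffOn_const.mul (contDiffOn_finset_prod _ _ fun i _ => h (σ i) i)

lemma contDiffOn_inv_entries {F : E → Fin m → Fin m → ℝ}
    (hF : ∀ i j, ContDiffOn ℝ (⊤ : ℕ∞) (fun x => F x i j) U)
    (hFinv : ∀ x ∈ U, IsUnit (Matrix.of (F x))) (i j : Fin m) :
    ContDiffOn ℝ (⊤ : ℕ∞) (fun x => (Matrix.of (F x))⁻¹ i j) U := by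
  have hdet : ∀ x ∈ U, (Matrix.of (F x)).det ≠ 0 := fun x hx =>
    IsUnit.ne_zero ((Matrix.isUnit_iff_isUnit_det _).mp (hFinv x hx))
  have hds : ContDiffOn ℝ (⊤ : ℕ∞) (fun x => (Matrix.of (F x)).det) U :=
    contDiffOn_det fun i j => hF i j
  have hadj : ContDiffOn ℝ (⊤ : ℕ∞) (fun x => (Matrix.of (F x)).adjugate i j) U := by
    simp only [Matrix.adjugate_apply]
    apply contDiffOn_det
    intro k l
    simp only [Matrix.updateRow_apply]
    by_cases hk : k = j
    · simp only [hk, if_pos rfl]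
      exact contDiffOn_const
    · simpa [hk] using hF k l
  have heq : ∀ x, (Matrix.of (F x))⁻¹ i j
      = ((Matrix.of (F x)).det)⁻¹ * (Matrix.of (F x)).adjugate i j := by
    intro x
    rw [Matrix.inv_def, Matrix.smul_apply, Ring.inverse_eq_inv', smul_eq_mul]
  simpa only [heq, Pi.inv_apply] using (hds.inv hdet).mul hadj

lemma inv_rel {m : ℕ} {Z Zhat : Fin m → E → E} {F : E → Fin m → Fin m → ℝ}
    (hFinv : ∀ x ∈ U, IsUnit (Matrix.of (F x)))
    (hrel : ∀ x ∈ U, ∀ j, Zhat j x = ∑ i, F x i j • Z i x)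
    {y : E} (hy : y ∈ U) (l : Fin m) :
    Z l y = ∑ i, (Matrix.of (F y))⁻¹ i l • Zhat i y := by
  set A := Matrix.of (F y) with hA
  have hmul : A * A⁻¹ = 1 :=
    Matrix.mul_nonsing_inv A ((Matrix.isUnit_iff_isUnit_det A).mp (hFinv y hy))
  have step1 : ∑ i, A⁻¹ i l • Zhat i y = ∑ i, ∑ r, (A⁻¹ i l * A r i) • Z r y := by
    refine Finset.sum_congr rfl fun i _ => ?_
    rw [hrel y hy i, Finset.smul_sum]
    refine Finset.sum_congr rfl fun r _ => ?_
    rw [smul_smul]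
    rfl
  have step2 : ∑ i, ∑ r, (A⁻¹ i l * A r i) • (Z r y)
      = ∑ r, (∑ i, A r i * A⁻¹ i l) • Z r y := by
    rw [Finset.sum_comm]
    refine Finset.sum_congr rfl fun r _ => ?_
    rw [Finset.sum_smul]
    refine Finset.sum_congr rfl fun i _ => ?_
    rw [mul_comm]
  have step3 : ∑ r, (∑ i, A r i * A⁻¹ i l) • Z r y = Z l y := by
    have h1 : ∀ r, (∑ i, A r i * A⁻¹ i l) = (1 : Matrix (Fin m) (Fin m) ℝ) r l := by
      intro r; rw [← Matrix.mul_apply, hmul]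
    simp only [h1, Matrix.one_apply, ite_smul, one_smul, zero_smul]
    simp
  rw [step1, step2, step3]

/-- If `[Ẑ_1,...,Ẑ_m] = [Z_1,...,Z_m] F` on `U` for a smooth `GL(m,ℝ)`-valued
function `F`, then for every `x ∈ U` and every `k`,
`Lie^{(k)}(Z)(x) = Lie^{(k)}(Ẑ)(x)`, and hence `Lie(Z)(x) = Lie(Ẑ)(x)`. -/
theorem statement0 {N m : ℕ} (U : Set (EucSp N)) (hU : IsOpen U)
    (Z Zhat : Fin m → EucSp N → EucSp N)
    (hZ : ∀ i, ContDiffOn ℝ (⊤ : ℕ∞) (Z i) U) (hZhat : ∀ i, ContDiffOn ℝ (⊤ : ℕ∞) (Zhat i) U)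
    (F : EucSp N → Fin m → Fin m → ℝ)
    (hF : ContDiffOn ℝ (⊤ : ℕ∞) F U)
    (hFinv : ∀ x ∈ U, IsUnit (Matrix.of (F x)))
    (hrel : ∀ x ∈ U, ∀ j, Zhat j x = ∑ i, F x i j • Z i x)
    (x : EucSp N) (hx : x ∈ U) :
    (∀ k, lieEval Z k x = lieEval Zhat k x) ∧
      fullLieEval Z x = fullLieEval Zhat x := by
  have hFij : ∀ i j, ContDiffOn ℝ (⊤ : ℕ∞) (fun x => F x i j) U := fun i j =>
    (contDiffOn_pi.mp ((contDiffOn_pi.mp hF) i)) j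
  have rep1 : ∀ j, ∀ W ∈ sigmaSet Zhat j, LieRep Z U j W :=
    rep_of_sigma hU hZ (fun i j x => F x i j) (fun i j => hFij i j)
      (fun y hy j => hrel y hy j)
  have rep2 : ∀ j, ∀ W ∈ sigmaSet Z j, LieRep Zhat U j W :=
    rep_of_sigma hU hZhat (fun i j x => (Matrix.of (F x))⁻¹ i j)
      (fun i j => contDiffOn_inv_entries hFij hFinv i j)
      (fun y hy l => inv_rel hFinv hrel hy l)
  have hk : ∀ k, lieEval Z k x = lieEval Zhat k x := fun k =>
    le_antisymm (lieEval_le_of_rep hx rep2) (lieEval_le_of_rep hx rep1)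
  exact ⟨hk, by unfold fullLieEval; exact iSup_congr hk⟩
end
end

section
/- Let P = O(M; D ⊕ D^⊥) be the adapted orthonormal frame bundle over a compact sub-Riemannian manifold (M,D,g), with the Ehresmann connection ω induced by ∇, and let A_1,...,A_d be the canonical horizontal vector fields on P corresponding to the first d standard basis vectors of ℝ^n (i.e. A_i(u) = ℓ_u⟨u⟨e_i⟩⟩ where ℓ_u is the horizontal lift). If D satisfies the Hörmander condition at every point of M (Lie(Z_1,...,Z_d)(x) = T_xM for any local orthonormal frame {Z_i} of D), then the vector fields A_1,...,A_d satisfy the partial Hörmander condition at every u ∈ P: π_* Lie(A_1,...,A_d)(u) = T_{π(u)}M. -/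
/- STATEMENT 3: Partial Hörmander condition for the canonical horizontal vector
fields `A_1,...,A_d` on the adapted frame bundle `P` over a sub-Riemannian
manifold, formalized in a local model: `P` and `M` are modelled by Euclidean
spaces, `π : P → M` is the (smooth) bundle projection.  The hypotheses state
(as holds in any local trivialization of `P = O(M; D ⊕ D^⊥)`) that near any
point the fields `A_i` are obtained from horizontal lifts `L_j = ℓ⟨Z_j⟩` of a
local orthonormal frame `{Z_j}` of `D` by an invertible (frame-component)
matrix `E(u)`, where the `Z_j` satisfy the Hörmander condition
`Lie(Z_1,...,Z_d)(x) = T_x M`.  The conclusion is the partial Hörmander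
condition `π_* Lie(A_1,...,A_d)(u) = T_{π(u)} M`. -/

noncomputable section
open Set

/-! ### Auxiliary lemmas -/

section Aux

variable {F : Type*} [NormedAddCommGroup F] [NormedSpace ℝ F]

theorem lieBkt_contDiff {X Y : F → F} (hX : ContDiff ℝ (⊤ : ℕ∞) X) (hY : ContDiff ℝ (⊤ : ℕ∞) Y) :
    ContDiff ℝ (⊤ : ℕ∞) (lieBkt X Y) :=
  ((hY.fderiv_right (by simp)).clm_apply hX).sub ((hX.fderiv_right (by simp)).clm_apply hY)

theorem sigma_smooth_s3 {d : ℕ} {A : Fin d → F → F} (hA : ∀ i, ContDiff ℝ (⊤ : ℕ∞) (A i)) :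
    ∀ k, ∀ Y ∈ sigmaSet A k, ContDiff ℝ (⊤ : ℕ∞) Y := by
  intro k
  induction k with
  | zero => rintro Y ⟨i, rfl⟩; exact hA i
  | succ k ih => rintro Y ⟨i, W, hW, rfl⟩; exact lieBkt_contDiff (hA i) (ih W hW)

/-- Pointwise Leibniz formula: bracket with a scalar multiple on the right. -/
theorem lieBkt_smul_right {X : F → F} {f : F → ℝ} {W : F → F}
    (hX : Differentiable ℝ X) (hf : Differentiable ℝ f) (hW : Differentiable ℝ W) (x : F) :
    lieBkt X (fun y => f y • W y) x
      = f x • lieBkt X W x + (fderiv ℝ f x (X x)) • W x := by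
  simp only [lieBkt, fderiv_fun_smul (hf x) (hW x)]
  simp only [ContinuousLinearMap.add_apply, ContinuousLinearMap.smul_apply,
    ContinuousLinearMap.smulRight_apply, map_smul, smul_sub]
  abel

theorem lieBkt_smul_left {X : F → F} {f : F → ℝ} {W : F → F}
    (hX : Differentiable ℝ X) (hf : Differentiable ℝ f) (hW : Differentiable ℝ W) (x : F) :
    lieBkt (fun y => f y • X y) W x
      = f x • lieBkt X W x + (-(fderiv ℝ f x (W x))) • X x := by
  simp only [lieBkt, fderiv_fun_smul (hf x) (hX x)]
  simp only [ContinuousLinearMap.add_apply, ContinuousLinearMap.smul_apply,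
    ContinuousLinearMap.smulRight_apply, map_smul, smul_sub, neg_smul]
  abel

theorem lieBkt_add_right {X W₁ W₂ : F → F}
    (hX : Differentiable ℝ X) (h₁ : Differentiable ℝ W₁) (h₂ : Differentiable ℝ W₂) (x : F) :
    lieBkt X (fun y => W₁ y + W₂ y) x = lieBkt X W₁ x + lieBkt X W₂ x := by
  simp only [lieBkt, fderiv_fun_add (h₁ x) (h₂ x)]
  simp only [ContinuousLinearMap.add_apply, map_add]
  abel

theorem lieBkt_zero_right {X : F → F} (x : F) :
    lieBkt X (fun _ => (0 : F)) x = 0 := by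
  simp [lieBkt, fderiv_const]

theorem lieBkt_sum_left {ι : Type*} {s : Finset ι} {g : ι → F → F} {W : F → F}
    (hg : ∀ m ∈ s, Differentiable ℝ (g m)) (hW : Differentiable ℝ W) (x : F) :
    lieBkt (fun y => ∑ m ∈ s, g m y) W x = ∑ m ∈ s, lieBkt (g m) W x := by
  classical
  induction s using Finset.induction with
  | empty => simp [lieBkt, fderiv_const]
  | @insert a s ha ih =>
      have hga := hg a (Finset.mem_insert_self a s)
      have hgs : ∀ m ∈ s, Differentiable ℝ (g m) := fun m hm =>
        hg m (Finset.mem_insert_of_mem hm)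
      have hsum : Differentiable ℝ (fun y => ∑ m ∈ s, g m y) := by
        apply Differentiable.fun_sum; exact fun m hm => hgs m hm
      have : (fun y => ∑ m ∈ insert a s, g m y) = fun y => g a y + ∑ m ∈ s, g m y := by
        funext y; rw [Finset.sum_insert ha]
      rw [this, Finset.sum_insert ha, ← ih hgs]
      simp only [lieBkt, fderiv_fun_add (hga x) (hsum x)]
      simp only [ContinuousLinearMap.add_apply, map_add]
      abel

/-- Smooth combinations of iterated brackets of `A` of order `≤ k`. -/
inductive IsComb {d : ℕ} (A : Fin d → F → F) (k : ℕ) : (F → F) → Prop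
  | base {j : ℕ} (hj : j ≤ k) {B : F → F} (hB : B ∈ sigmaSet A j) : IsComb A k B
  | smul {f : F → ℝ} {W : F → F} (hf : ContDiff ℝ (⊤ : ℕ∞) f) (hW : IsComb A k W) :
      IsComb A k (fun x => f x • W x)
  | add {W₁ W₂ : F → F} (h₁ : IsComb A k W₁) (h₂ : IsComb A k W₂) :
      IsComb A k (fun x => W₁ x + W₂ x)
  | zero : IsComb A k (fun _ => 0)

theorem IsComb.mono {d : ℕ} {A : Fin d → F → F} {k k' : ℕ} (hkk : k ≤ k') {W : F → F}
    (h : IsComb A k W) : IsComb A k' W := by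
  induction h with
  | base hj hB => exact .base (hj.trans hkk) hB
  | smul hf _ ih => exact .smul hf ih
  | add _ _ ih₁ ih₂ => exact .add ih₁ ih₂
  | zero => exact .zero

theorem IsComb.smooth {d : ℕ} {A : Fin d → F → F} (hA : ∀ i, ContDiff ℝ (⊤ : ℕ∞) (A i))
    {k : ℕ} {W : F → F} (h : IsComb A k W) : ContDiff ℝ (⊤ : ℕ∞) W := by
  induction h with
  | base hj hB => exact sigma_smooth_s3 hA _ _ hB
  | smul hf _ ih => exact hf.smul ih
  | add _ _ ih₁ ih₂ => exact ih₁.add ih₂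
  | zero => exact contDiff_const

theorem IsComb.mem {d : ℕ} {A : Fin d → F → F} {k : ℕ} {W : F → F}
    (h : IsComb A k W) (u : F) : W u ∈ lieEval A k u := by
  induction h with
  | @base j hj B hB => exact Submodule.subset_span ⟨j, hj, B, hB, rfl⟩
  | smul hf _ ih => exact Submodule.smul_mem _ _ ih
  | add _ _ ih₁ ih₂ => exact Submodule.add_mem _ ih₁ ih₂
  | zero => exact Submodule.zero_mem _

theorem IsComb.sum {d : ℕ} {A : Fin d → F → F} {k : ℕ} {ι : Type*} {s : Finset ι}
    {g : ι → F → F} (h : ∀ m ∈ s, IsComb A k (g m)) :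
    IsComb A k (fun x => ∑ m ∈ s, g m x) := by
  classical
  induction s using Finset.induction with
  | empty => simpa using IsComb.zero
  | @insert a s ha ih =>
      have : (fun x => ∑ m ∈ insert a s, g m x) = fun x => g a x + ∑ m ∈ s, g m x := by
        funext x; rw [Finset.sum_insert ha]
      rw [this]
      exact (h a (Finset.mem_insert_self a s)).add
        (ih fun m hm => h m (Finset.mem_insert_of_mem hm))

theorem IsComb.bkt_basis {d : ℕ} {A : Fin d → F → F} (hA : ∀ i, ContDiff ℝ (⊤ : ℕ∞) (A i))
    (m : Fin d) {k : ℕ} {W : F → F} (h : IsComb A k W) :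
    IsComb A (k + 1) (lieBkt (A m) W) := by
  induction h with
  | @base j hj B hB =>
      exact .base (Nat.succ_le_succ hj) (by exact ⟨m, B, hB, rfl⟩)
  | @smul f W hf hW ih =>
      have hWs : Differentiable ℝ W := (hW.smooth hA).differentiable (by simp)
      have heq : lieBkt (A m) (fun x => f x • W x)
          = fun x => f x • lieBkt (A m) W x + (fun y => fderiv ℝ f y (A m y)) x • W x :=
        funext fun x => lieBkt_smul_right ((hA m).differentiable (by simp))
          (hf.differentiable (by simp)) hWs x
      rw [heq]
      exact (IsComb.smul hf ih).add
        (IsComb.smul ((hf.fderiv_right (by simp)).clm_apply (hA m)) (hW.mono (Nat.le_succ k)))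
  | @add W₁ W₂ h₁ h₂ ih₁ ih₂ =>
      have heq : lieBkt (A m) (fun x => W₁ x + W₂ x)
          = fun x => lieBkt (A m) W₁ x + lieBkt (A m) W₂ x :=
        funext fun x => lieBkt_add_right ((hA m).differentiable (by simp))
          ((h₁.smooth hA).differentiable (by simp)) ((h₂.smooth hA).differentiable (by simp)) x
      rw [heq]
      exact ih₁.add ih₂
  | zero =>
      have heq : lieBkt (A m) (fun _ => (0 : F)) = fun _ => (0 : F) :=
        funext fun x => lieBkt_zero_right x
      rw [heq]; exact .zero

theorem comb_bkt_left {d : ℕ} {A : Fin d → F → F} (hA : ∀ i, ContDiff ℝ (⊤ : ℕ∞) (A i))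
    {c : Fin d → F → ℝ} (hc : ∀ i, ContDiff ℝ (⊤ : ℕ∞) (c i)) {L : F → F}
    (hL : ∀ x, L x = ∑ i, c i x • A i x) {k : ℕ} {W : F → F} (h : IsComb A k W) :
    IsComb A (k + 1) (lieBkt L W) := by
  have hWs : ContDiff ℝ (⊤ : ℕ∞) W := h.smooth hA
  have hWd : Differentiable ℝ W := hWs.differentiable (by simp)
  have hLfun : L = fun x => ∑ i, (fun y => c i y • A i y) x := funext hL
  have heq : lieBkt L W = fun x => ∑ i,
      (fun y => c i y • lieBkt (A i) W y + (fun z => -(fderiv ℝ (c i) z (W z))) y • A i y) x := by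
    funext x
    rw [hLfun, lieBkt_sum_left (g := fun i y => c i y • A i y) (fun i _ =>
      ((hc i).smul (hA i)).differentiable (by simp)) hWd x]
    exact Finset.sum_congr rfl fun i _ =>
      lieBkt_smul_left ((hA i).differentiable (by simp))
        ((hc i).differentiable (by simp)) hWd x
  rw [heq]
  refine IsComb.sum fun i _ => IsComb.add (IsComb.smul (hc i) (h.bkt_basis hA i)) ?_
  exact IsComb.smul (((hc i).fderiv_right (by simp)).clm_apply hWs).neg
    (IsComb.base (Nat.zero_le _) ⟨i, rfl⟩)

theorem sigma_isComb {d : ℕ} {A : Fin d → F → F} (hA : ∀ i, ContDiff ℝ (⊤ : ℕ∞) (A i))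
    {c : Fin d → Fin d → F → ℝ} (hc : ∀ i j, ContDiff ℝ (⊤ : ℕ∞) (c i j))
    {L : Fin d → F → F} (hL : ∀ j x, L j x = ∑ i, c i j x • A i x) :
    ∀ k, ∀ Y ∈ sigmaSet L k, IsComb A k Y := by
  intro k
  induction k with
  | zero =>
      rintro Y ⟨j, rfl⟩
      have : L j = fun x => ∑ i, (fun y => c i j y • A i y) x := funext (hL j)
      rw [this]
      exact IsComb.sum fun i _ => IsComb.smul (hc i j) (IsComb.base le_rfl ⟨i, rfl⟩)
  | succ k ih =>
      rintro Y ⟨i, W, hW, rfl⟩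
      exact comb_bkt_left hA (fun m => hc m i) (hL i) (ih W hW)

end Aux

section Related

variable {NP NM : ℕ}

/-- π-related vector fields have π-related Lie brackets. -/
theorem related_lieBkt {π : EucSp NP → EucSp NM} (hπ : ContDiff ℝ (⊤ : ℕ∞) π)
    {X Y : EucSp NP → EucSp NP} {X' Y' : EucSp NM → EucSp NM}
    (hX : ContDiff ℝ (⊤ : ℕ∞) X) (hY : ContDiff ℝ (⊤ : ℕ∞) Y)
    (hX' : ContDiff ℝ (⊤ : ℕ∞) X') (hY' : ContDiff ℝ (⊤ : ℕ∞) Y')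
    (hrX : ∀ v, fderiv ℝ π v (X v) = X' (π v))
    (hrY : ∀ v, fderiv ℝ π v (Y v) = Y' (π v)) (v : EucSp NP) :
    fderiv ℝ π v (lieBkt X Y v) = lieBkt X' Y' (π v) := by
  have hπd : Differentiable ℝ π := hπ.differentiable (by simp)
  have hDπ : Differentiable ℝ (fderiv ℝ π) := (hπ.fderiv_right (m := (⊤ : ℕ∞)) (by simp)).differentiable (by simp)
  have hsymm : ∀ a b, fderiv ℝ (fderiv ℝ π) v a b = fderiv ℝ (fderiv ℝ π) v b a :=
    second_derivative_symmetric (fun y => (hπd y).hasFDerivAt) (hDπ v).hasFDerivAt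
  have key : ∀ (W : EucSp NP → EucSp NP) (W' : EucSp NM → EucSp NM),
      ContDiff ℝ (⊤ : ℕ∞) W → ContDiff ℝ (⊤ : ℕ∞) W' → (∀ z, fderiv ℝ π z (W z) = W' (π z)) →
      ∀ w : EucSp NP,
        fderiv ℝ π v (fderiv ℝ W v w) + fderiv ℝ (fderiv ℝ π) v w (W v)
          = fderiv ℝ W' (π v) (fderiv ℝ π v w) := by
    intro W W' hW hW' hrel w
    have e : (fun z => fderiv ℝ π z (W z)) = fun z => W' (π z) := funext hrel
    have d1 : fderiv ℝ (fun z => fderiv ℝ π z (W z)) v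
        = (fderiv ℝ π v).comp (fderiv ℝ W v) + (fderiv ℝ (fderiv ℝ π) v).flip (W v) :=
      fderiv_clm_apply (hDπ v) ((hW.differentiable (by simp)) v)
    have d2 : fderiv ℝ (fun z => W' (π z)) v
        = (fderiv ℝ W' (π v)).comp (fderiv ℝ π v) :=
      fderiv_comp v ((hW'.differentiable (by simp)) (π v)) (hπd v)
    rw [e, d2] at d1
    have := congrArg (fun (T : EucSp NP →L[ℝ] EucSp NM) => T w) d1
    simpa using this.symm
  have k1 := key Y Y' hY hY' hrY (X v)
  have k2 := key X X' hX hX' hrX (Y v)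
  rw [hrX v] at k1
  rw [hrY v] at k2
  have hs := hsymm (X v) (Y v)
  simp only [lieBkt, map_sub]
  rw [eq_sub_of_add_eq k1, eq_sub_of_add_eq k2, hs]
  abel

/-- Each iterated bracket of the `Z`'s is π-related to a corresponding iterated
bracket of the `L`'s. -/
theorem exists_related {π : EucSp NP → EucSp NM} (hπ : ContDiff ℝ (⊤ : ℕ∞) π)
    {d : ℕ} {Z : Fin d → EucSp NM → EucSp NM} {L : Fin d → EucSp NP → EucSp NP}
    (hZ : ∀ i, ContDiff ℝ (⊤ : ℕ∞) (Z i)) (hLs : ∀ i, ContDiff ℝ (⊤ : ℕ∞) (L i))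
    (hrel : ∀ i v, fderiv ℝ π v (L i v) = Z i (π v)) :
    ∀ k, ∀ Y ∈ sigmaSet Z k, ∃ Yh ∈ sigmaSet L k,
      ContDiff ℝ (⊤ : ℕ∞) Yh ∧ ∀ v, fderiv ℝ π v (Yh v) = Y (π v) := by
  intro k
  induction k with
  | zero =>
      rintro Y ⟨i, rfl⟩
      exact ⟨L i, ⟨i, rfl⟩, hLs i, hrel i⟩
  | succ k ih =>
      rintro Y ⟨i, W, hW, rfl⟩
      obtain ⟨Wh, hWhmem, hWhs, hWhrel⟩ := ih W hW
      refine ⟨lieBkt (L i) Wh, ⟨i, Wh, hWhmem, rfl⟩, lieBkt_contDiff (hLs i) hWhs, ?_⟩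
      intro v
      exact related_lieBkt hπ (hLs i) hWhs (hZ i) (sigma_smooth_s3 hZ k W hW)
        (hrel i) hWhrel v

end Related

section MatrixAux

variable {E : Type*} [NormedAddCommGroup E] [NormedSpace ℝ E]

theorem contDiff_det {d : ℕ} {M : E → Matrix (Fin d) (Fin d) ℝ}
    (h : ∀ i j, ContDiff ℝ (⊤ : ℕ∞) fun v => M v i j) :
    ContDiff ℝ (⊤ : ℕ∞) fun v => (M v).det := by
  have : (fun v => (M v).det)
      = fun v => ∑ σ : Equiv.Perm (Fin d),
          ((Equiv.Perm.sign σ : ℤ) : ℝ) * ∏ i, M v (σ i) i := by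
    funext v; rw [Matrix.det_apply']
  rw [this]
  exact ContDiff.sum fun σ _ =>
    contDiff_const.mul (contDiff_prod fun i _ => h (σ i) i)

theorem contDiff_adjugate {d : ℕ} {M : E → Matrix (Fin d) (Fin d) ℝ}
    (h : ∀ i j, ContDiff ℝ (⊤ : ℕ∞) fun v => M v i j) (i j : Fin d) :
    ContDiff ℝ (⊤ : ℕ∞) fun v => (M v).adjugate i j := by
  have : (fun v => (M v).adjugate i j)
      = fun v => ((M v).updateRow j (Pi.single i 1)).det := by
    funext v; rw [Matrix.adjugate_apply]
  rw [this]
  apply contDiff_det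
  intro a b
  rcases eq_or_ne a j with rfl | hab
  · simp only [Matrix.updateRow_self]
    exact contDiff_const
  · simp only [Matrix.updateRow_apply, hab, if_false]
    exact h a b

theorem contDiff_inv_entry {d : ℕ} {M : E → Matrix (Fin d) (Fin d) ℝ}
    (h : ∀ i j, ContDiff ℝ (⊤ : ℕ∞) fun v => M v i j)
    (hunit : ∀ v, IsUnit (M v)) (i j : Fin d) :
    ContDiff ℝ (⊤ : ℕ∞) fun v => (M v)⁻¹ i j := by
  have hdet : ∀ v, (M v).det ≠ 0 := fun v =>
    (Matrix.isUnit_iff_isUnit_det (M v)).mp (hunit v) |>.ne_zero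
  have : (fun v => (M v)⁻¹ i j) = fun v => ((M v).det)⁻¹ * (M v).adjugate i j := by
    funext v
    rw [Matrix.inv_def, Matrix.smul_apply, Ring.inverse_eq_inv, smul_eq_mul]
  rw [this]
  exact ((contDiff_det h).inv hdet).mul (contDiff_adjugate h i j)

end MatrixAux

theorem statement3 {NP NM d : ℕ} (π : EucSp NP → EucSp NM) (hπ : ContDiff ℝ (⊤ : ℕ∞) π)
    (A : Fin d → EucSp NP → EucSp NP) (hA : ∀ i, ContDiff ℝ (⊤ : ℕ∞) (A i))
    (u : EucSp NP)
    (hstruct : ∃ (Z : Fin d → EucSp NM → EucSp NM)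
        (L : Fin d → EucSp NP → EucSp NP)
        (Emat : EucSp NP → Fin d → Fin d → ℝ),
        (∀ i, ContDiff ℝ (⊤ : ℕ∞) (Z i)) ∧ (∀ i, ContDiff ℝ (⊤ : ℕ∞) (L i)) ∧
        ContDiff ℝ (⊤ : ℕ∞) Emat ∧
        (∀ v, IsUnit (Matrix.of (Emat v))) ∧
        -- each `L_j` is the horizontal lift `ℓ⟨Z_j⟩`: `L_j(v) = Z_j(π v) + vertical`
        (∀ i v, fderiv ℝ π v (L i v) = Z i (π v)) ∧
        -- `[A_1,...,A_d] = [L_1,...,L_d] E` (frame-rotation by `E ∈ O(d)`)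
        (∀ i v, A i v = ∑ j, Emat v j i • L j v) ∧
        -- Hörmander condition for the orthonormal frame of `D` at `π u`
        fullLieEval Z (π u) = ⊤) :
    Submodule.map (fderiv ℝ π u).toLinearMap (fullLieEval A u) = ⊤ := by
  classical
  obtain ⟨Z, L, Emat, hZ, hLs, hEmat, hEunit, hrel, hALE, hHor⟩ := hstruct
  set M : EucSp NP → Matrix (Fin d) (Fin d) ℝ := fun v => Matrix.of (Emat v) with hM
  have hentry : ∀ i j, ContDiff ℝ (⊤ : ℕ∞) fun v => M v i j := fun i j =>
    contDiff_pi.mp (contDiff_pi.mp hEmat i) j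
  have hMunit : ∀ v, IsUnit (M v) := hEunit
  -- the inverse matrix coefficients
  set c : Fin d → Fin d → EucSp NP → ℝ := fun i j v => (M v)⁻¹ i j with hcdef
  have hc : ∀ i j, ContDiff ℝ (⊤ : ℕ∞) (c i j) := fun i j =>
    contDiff_inv_entry hentry hMunit i j
  -- `L_j = ∑ i (E⁻¹)_{ij} A_i`
  have hLA : ∀ j v, L j v = ∑ i, c i j v • A i v := by
    intro j v
    have hinv : M v * (M v)⁻¹ = 1 :=
      Matrix.mul_nonsing_inv (M v) ((Matrix.isUnit_iff_isUnit_det (M v)).mp (hMunit v))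
    calc L j v = ∑ m, ((M v * (M v)⁻¹) m j) • L m v := by
          rw [hinv]
          simp [Matrix.one_apply, ite_smul]
      _ = ∑ m, ∑ i, (M v m i * (M v)⁻¹ i j) • L m v := by
          simp only [Matrix.mul_apply, Finset.sum_smul]
      _ = ∑ i, ∑ m, ((M v)⁻¹ i j * M v m i) • L m v := by
          rw [Finset.sum_comm]
          simp [mul_comm]
      _ = ∑ i, (M v)⁻¹ i j • ∑ m, M v m i • L m v := by
          simp [Finset.smul_sum, smul_smul]
      _ = ∑ i, c i j v • A i v := by
          refine Finset.sum_congr rfl fun i _ => ?_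
          rw [hALE i v]
          rfl
  -- every iterated bracket of the `L`'s is a smooth combination of brackets of the `A`'s
  have hLcomb : ∀ k, ∀ Y ∈ sigmaSet L k, IsComb A k Y :=
    sigma_isComb hA hc hLA
  -- conclude
  rw [eq_top_iff, ← hHor]
  rw [fullLieEval]
  refine iSup_le fun k => ?_
  rw [lieEval]
  refine Submodule.span_le.mpr ?_
  rintro w ⟨j, hjk, Y, hY, rfl⟩
  obtain ⟨Yh, hYhmem, hYhs, hYhrel⟩ := exists_related hπ hZ hLs hrel j Y hY
  have hmem : Yh u ∈ fullLieEval A u := by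
    have := (hLcomb j Yh hYhmem).mem u
    exact le_iSup (fun k => lieEval A k u) j this
  have : Y (π u) = (fderiv ℝ π u).toLinearMap (Yh u) := (hYhrel u).symm
  rw [this]
  exact Submodule.mem_map_of_mem hmem
end
end

section
/- With A_1,...,A_d the canonical horizontal vector fields on the adapted frame bundle P over a compact sub-Riemannian manifold (M,D,g), and Δ̃f = Trace_D(∇ grad_D f), one has Σ_{i=1}^d A_i²(π^*f) = π^*(Δ̃f) for every f ∈ C²(M), where π^*f = f ∘ π. -/
/- STATEMENT 10: `Σ_{i=1}^d A_i²(π^*f) = π^*(Δ̃ f)`, formalized in the local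
coordinates `(x; e) = (x^1,...,x^n; {e_{αβ}})` of the adapted frame bundle
`P = O(M; D ⊕ D^⊥)` over a chart of `M`, in which the canonical horizontal
vector fields are `A_i(u) = Σ_γ e_{γi} (Z_γ − Σ_{α,β,δ} Γ^α_{βγ} e_{βδ}
∂/∂e_{αδ})`, `π` is the first projection, and
`Δ̃f = Trace_D(∇ grad_D f) = Σ_{i≤d} Z_i² f + Σ_{i,j≤d} ω̂^j_i⟨Z_j⟩ Z_i f`
(with `ω̂^j_i⟨Z_j⟩ = Γ^j_{ij}`).  The Christoffel symbols satisfy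
`Γ^γ_{δε} = −Γ^δ_{γε}` and vanish on the off-diagonal blocks, and `(x,e)` is a
point of `P`, i.e. the frame components `e` are block-orthogonal. -/

noncomputable section
open Set

def vfAct {n : ℕ} (X : EucSp n → EucSp n) (f : EucSp n → ℝ) : EucSp n → ℝ :=
  fun x => fderiv ℝ f x (X x)

theorem statement10 {n d : ℕ} (hd : d ≤ n)
    (Z : Fin n → EucSp n → EucSp n) (hZ : ∀ γ, ContDiff ℝ (⊤ : ℕ∞) (Z γ))
    (Γc : Fin n → Fin n → Fin n → EucSp n → ℝ)
    (hΓsmooth : ∀ α β γ, ContDiff ℝ (⊤ : ℕ∞) (Γc α β γ))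
    (hΓanti : ∀ (α β γ : Fin n) (x : EucSp n), Γc α β γ x = - Γc β α γ x)
    (hΓblock : ∀ (α β γ : Fin n) (x : EucSp n),
      (((α : ℕ) < d ∧ d ≤ (β : ℕ)) ∨ (d ≤ (α : ℕ) ∧ (β : ℕ) < d)) → Γc α β γ x = 0)
    (f : EucSp n → ℝ) (hf : ContDiff ℝ (⊤ : ℕ∞) f) :
    -- the canonical horizontal vector fields in the local chart of `P`
    letI A : Fin n → (EucSp n × (Fin n → Fin n → ℝ)) → (EucSp n × (Fin n → Fin n → ℝ)) :=
      fun i q => (∑ γ, q.2 γ i • Z γ q.1,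
        fun α δ => - ∑ β, ∑ γ, Γc α β γ q.1 * q.2 β δ * q.2 γ i)
    -- the action of a vector field on `P` on a function on `P`
    letI actP : ((EucSp n × (Fin n → Fin n → ℝ)) → (EucSp n × (Fin n → Fin n → ℝ)))
        → ((EucSp n × (Fin n → Fin n → ℝ)) → ℝ) → (EucSp n × (Fin n → Fin n → ℝ)) → ℝ :=
      fun X u q => fderiv ℝ u q (X q)
    ∀ (x : EucSp n) (e : Fin n → Fin n → ℝ),
      -- `(x, e)` lies in the bundle `P`: `e` is block-diagonal orthogonal (its
      -- `O(d)`-block suffices here)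
      (∀ γ i : Fin n, d ≤ (γ : ℕ) → (i : ℕ) < d → e γ i = 0) →
      (∀ γ δ : Fin n, (γ : ℕ) < d → (δ : ℕ) < d →
        (∑ i ∈ Finset.univ.filter (fun i : Fin n => (i : ℕ) < d), e γ i * e δ i)
          = if γ = δ then 1 else 0) →
      -- the identity `Σ_{i≤d} A_i²(π^* f) = π^*(Δ̃ f)` at `u = (x,e)`:
      (∑ i ∈ Finset.univ.filter (fun i : Fin n => (i : ℕ) < d),
          actP (A i) (actP (A i) (fun q => f q.1)) (x, e))
        = ∑ γ ∈ Finset.univ.filter (fun γ : Fin n => (γ : ℕ) < d),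
            (vfAct (Z γ) (vfAct (Z γ) f) x
              + (∑ β ∈ Finset.univ.filter (fun β : Fin n => (β : ℕ) < d),
                  Γc β γ β x * vfAct (Z γ) f x)) := by
  intro x e he0 horth
  beta_reduce
  set D := Finset.univ.filter (fun i : Fin n => (i : ℕ) < d) with hD
  set h : Fin n → EucSp n → ℝ := fun γ y => fderiv ℝ f y (Z γ y) with hh_def
  have hh : ∀ γ, ContDiff ℝ (⊤ : ℕ∞) (h γ) := fun γ => (hf.fderiv_right (by simp)).clm_apply (hZ γ)
  set k : Fin n → Fin n → ℝ := fun γ δ => fderiv ℝ (h γ) x (Z δ x) with hk_def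
  -- the first action `A_i (π^* f)`
  have key1 : ∀ (i : Fin n) (q : EucSp n × (Fin n → Fin n → ℝ)),
      fderiv ℝ (fun p : EucSp n × (Fin n → Fin n → ℝ) => f p.1) q
        ((∑ γ, q.2 γ i • Z γ q.1,
          fun α δ => - ∑ β, ∑ γ, Γc α β γ q.1 * q.2 β δ * q.2 γ i))
        = ∑ γ, q.2 γ i * h γ q.1 := by
    intro i q
    have hfd : HasFDerivAt (fun p : EucSp n × (Fin n → Fin n → ℝ) => f p.1)
        ((fderiv ℝ f q.1).comp (ContinuousLinearMap.fst ℝ (EucSp n) (Fin n → Fin n → ℝ))) q :=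
      ((hf.differentiable (by simp) q.1).hasFDerivAt).comp q hasFDerivAt_fst
    rw [hfd.fderiv]
    simp only [ContinuousLinearMap.comp_apply, ContinuousLinearMap.coe_fst', map_sum,
      map_smul, smul_eq_mul, hh_def]
  -- the second action, at the point (x, e)
  have key2 : ∀ i : Fin n,
      fderiv ℝ (fun q : EucSp n × (Fin n → Fin n → ℝ) => ∑ γ, q.2 γ i * h γ q.1) (x, e)
        ((∑ γ, e γ i • Z γ x, fun α δ => - ∑ β, ∑ γ, Γc α β γ x * e β δ * e γ i))
      = ∑ γ, (e γ i * ∑ δ, e δ i * k γ δ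
              + h γ x * (- ∑ β, ∑ γ', Γc γ β γ' x * e β i * e γ' i)) := by
    intro i
    have hterm : ∀ γ : Fin n,
        HasFDerivAt (fun q : EucSp n × (Fin n → Fin n → ℝ) => q.2 γ i * h γ q.1)
          (e γ i • ((fderiv ℝ (h γ) x).comp
              (ContinuousLinearMap.fst ℝ (EucSp n) (Fin n → Fin n → ℝ)))
            + h γ x • ((ContinuousLinearMap.proj i).comp
              ((ContinuousLinearMap.proj γ).comp
                (ContinuousLinearMap.snd ℝ (EucSp n) (Fin n → Fin n → ℝ)))))
          (x, e) := by
      intro γ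
      have hF1 : HasFDerivAt (fun q : EucSp n × (Fin n → Fin n → ℝ) => q.2 γ i)
          ((ContinuousLinearMap.proj i).comp
            ((ContinuousLinearMap.proj γ).comp
              (ContinuousLinearMap.snd ℝ (EucSp n) (Fin n → Fin n → ℝ)))) (x, e) :=
        ((ContinuousLinearMap.proj i).comp
            ((ContinuousLinearMap.proj γ).comp
              (ContinuousLinearMap.snd ℝ (EucSp n) (Fin n → Fin n → ℝ)))).hasFDerivAt
      have hF2 : HasFDerivAt (fun q : EucSp n × (Fin n → Fin n → ℝ) => h γ q.1)
          ((fderiv ℝ (h γ) x).comp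
            (ContinuousLinearMap.fst ℝ (EucSp n) (Fin n → Fin n → ℝ))) (x, e) :=
        by
          have := ((hh γ).differentiable (by simp) x).hasFDerivAt
          exact this.comp (x, e) (hasFDerivAt_fst :
            HasFDerivAt Prod.fst (ContinuousLinearMap.fst ℝ (EucSp n) (Fin n → Fin n → ℝ)) (x, e))
      exact hF1.mul hF2
    have hsum : HasFDerivAt (fun q : EucSp n × (Fin n → Fin n → ℝ) => ∑ γ, q.2 γ i * h γ q.1)
        (∑ γ, (e γ i • ((fderiv ℝ (h γ) x).comp
              (ContinuousLinearMap.fst ℝ (EucSp n) (Fin n → Fin n → ℝ)))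
            + h γ x • ((ContinuousLinearMap.proj i).comp
              ((ContinuousLinearMap.proj γ).comp
                (ContinuousLinearMap.snd ℝ (EucSp n) (Fin n → Fin n → ℝ)))))) (x, e) :=
      HasFDerivAt.fun_sum (fun γ _ => hterm γ)
    rw [hsum.fderiv]
    simp only [ContinuousLinearMap.sum_apply, ContinuousLinearMap.add_apply,
      ContinuousLinearMap.smul_apply, ContinuousLinearMap.comp_apply,
      ContinuousLinearMap.coe_fst', ContinuousLinearMap.coe_snd',
      ContinuousLinearMap.proj_apply, smul_eq_mul, map_sum, map_smul, hk_def]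
  -- orthogonality sums
  have hS : ∀ β γ : Fin n, (∑ i ∈ D, e β i * e γ i)
      = if β = γ ∧ (β : ℕ) < d then 1 else 0 := by
    intro β γ
    by_cases hβ : (β : ℕ) < d
    · by_cases hγ : (γ : ℕ) < d
      · rw [horth β γ hβ hγ]
        by_cases hbg : β = γ <;> simp [hbg, hβ, hγ]
      · rw [Finset.sum_eq_zero (fun i hi => by
          rw [he0 γ i (le_of_not_gt hγ) (by simpa [hD] using hi), mul_zero])]
        have : ¬(β = γ ∧ (β : ℕ) < d) := fun ⟨hbg, _⟩ => hγ (hbg ▸ hβ)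
        simp [this]
    · rw [Finset.sum_eq_zero (fun i hi => by
        rw [he0 β i (le_of_not_gt hβ) (by simpa [hD] using hi), zero_mul])]
      simp [hβ]
  have horthsum : ∀ F : Fin n → Fin n → ℝ,
      (∑ i ∈ D, ∑ β : Fin n, ∑ γ : Fin n, e β i * e γ i * F β γ) = ∑ β ∈ D, F β β := by
    intro F
    rw [Finset.sum_comm]
    have h1 : ∀ β : Fin n, (∑ i ∈ D, ∑ γ : Fin n, e β i * e γ i * F β γ)
        = if (β : ℕ) < d then F β β else 0 := by
      intro β
      rw [Finset.sum_comm]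
      have h2 : ∀ γ : Fin n, (∑ i ∈ D, e β i * e γ i * F β γ)
          = (if β = γ ∧ (β : ℕ) < d then 1 else 0) * F β γ := by
        intro γ; rw [← Finset.sum_mul, hS]
      rw [Finset.sum_congr rfl (fun γ _ => h2 γ)]
      simp only [ite_and, ite_mul, one_mul, zero_mul]
      by_cases hβ : (β : ℕ) < d
      · simp [Finset.sum_ite_eq, hβ]
      · simp [hβ]
    rw [Finset.sum_congr rfl (fun β _ => h1 β), hD, ← Finset.sum_filter]
  -- now put things together
  calc
    ∑ i ∈ D, fderiv ℝ (fun q : EucSp n × (Fin n → Fin n → ℝ) =>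
        fderiv ℝ (fun p : EucSp n × (Fin n → Fin n → ℝ) => f p.1) q
          ((∑ γ, q.2 γ i • Z γ q.1,
            fun α δ => - ∑ β, ∑ γ, Γc α β γ q.1 * q.2 β δ * q.2 γ i))) (x, e)
        ((∑ γ, e γ i • Z γ x, fun α δ => - ∑ β, ∑ γ, Γc α β γ x * e β δ * e γ i))
      = ∑ i ∈ D, ∑ γ, (e γ i * ∑ δ, e δ i * k γ δ
          + h γ x * (- ∑ β, ∑ γ', Γc γ β γ' x * e β i * e γ' i)) := by
        refine Finset.sum_congr rfl (fun i _ => ?_)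
        rw [show (fun q : EucSp n × (Fin n → Fin n → ℝ) =>
            fderiv ℝ (fun p : EucSp n × (Fin n → Fin n → ℝ) => f p.1) q
              ((∑ γ, q.2 γ i • Z γ q.1,
                fun α δ => - ∑ β, ∑ γ, Γc α β γ q.1 * q.2 β δ * q.2 γ i)))
          = fun q => ∑ γ, q.2 γ i * h γ q.1 from funext (key1 i)]
        exact key2 i
    _ = (∑ i ∈ D, ∑ γ : Fin n, ∑ δ : Fin n, e γ i * e δ i * k γ δ)
        + ∑ i ∈ D, ∑ β : Fin n, ∑ γ' : Fin n,
            e β i * e γ' i * (∑ γ : Fin n, -(Γc γ β γ' x * h γ x)) := by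
        rw [← Finset.sum_add_distrib]
        refine Finset.sum_congr rfl (fun i _ => ?_)
        rw [Finset.sum_add_distrib]
        congr 1
        · refine Finset.sum_congr rfl (fun γ _ => ?_)
          rw [Finset.mul_sum]
          exact Finset.sum_congr rfl (fun δ _ => by ring)
        · have expand : ∀ γ : Fin n,
              h γ x * (- ∑ β, ∑ γ', Γc γ β γ' x * e β i * e γ' i)
                = ∑ β : Fin n, ∑ γ' : Fin n, e β i * e γ' i * (-(Γc γ β γ' x * h γ x)) := by
            intro γ
            rw [mul_neg, Finset.mul_sum, ← Finset.sum_neg_distrib]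
            refine Finset.sum_congr rfl (fun β _ => ?_)
            rw [Finset.mul_sum, ← Finset.sum_neg_distrib]
            exact Finset.sum_congr rfl (fun γ' _ => by ring)
          rw [Finset.sum_congr rfl (fun γ _ => expand γ), Finset.sum_comm]
          refine Finset.sum_congr rfl (fun β _ => ?_)
          rw [Finset.sum_comm]
          refine Finset.sum_congr rfl (fun γ' _ => ?_)
          rw [Finset.mul_sum]
    _ = (∑ γ ∈ D, k γ γ) + ∑ β ∈ D, ∑ γ : Fin n, -(Γc γ β β x * h γ x) := by
        rw [horthsum, horthsum]
    _ = (∑ γ ∈ D, k γ γ) + ∑ γ ∈ D, ∑ β ∈ D, Γc β γ β x * h γ x := by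
        congr 1
        have hstep : ∀ β ∈ D, (∑ γ : Fin n, -(Γc γ β β x * h γ x))
            = ∑ γ ∈ D, Γc β γ β x * h γ x := by
          intro β hβ
          have hβd : (β : ℕ) < d := by simpa [hD] using hβ
          have h1 : ∀ γ ∈ Finset.univ, -(Γc γ β β x * h γ x) = Γc β γ β x * h γ x := by
            intro γ _; rw [hΓanti β γ β x]; ring
          rw [Finset.sum_congr rfl h1]
          refine (Finset.sum_subset (Finset.subset_univ D) (fun γ _ hγ => ?_)).symm
          have hγd : d ≤ (γ : ℕ) := le_of_not_gt (by simpa [hD] using hγ)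
          rw [hΓblock β γ β x (Or.inl ⟨hβd, hγd⟩), zero_mul]
        rw [Finset.sum_congr rfl hstep]
        exact Finset.sum_comm
    _ = ∑ γ ∈ D, (vfAct (Z γ) (vfAct (Z γ) f) x
          + ∑ β ∈ D, Γc β γ β x * vfAct (Z γ) f x) := by
        rw [← Finset.sum_add_distrib]
        exact Finset.sum_congr rfl (fun γ _ => rfl)
end
end
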